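/- Let Σ_X and Σ_Y be N×N positive definite matrices with eigenvalue lists λ_X and λ_Y (each an unordered multiset). Then the squared Wasserstein-2 distance between N(0,Σ_X) and N(0,Σ_Y), given by Tr[Σ_X + Σ_Y − 2(Σ_Y^{1/2} Σ_X Σ_Y^{1/2})^{1/2}], is at least Σ_i (√λ_{X,i} − √λ_{Y,i})² when both eigenvalue lists are sorted in the same order, with equality when Σ_X and Σ_Y commute with matching eigenvector orderings. -/

import Mathlib

open Matrix

/-- The positive semidefinite square root of a positive semidefinite matrix
(the definition `Matrix.PosSemidef.sqrt` of Mathlib, Dec 2024, since removed). -/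
noncomputable def Matrix.PosSemidef.sqrt {n : Type*} [Fintype n] [DecidableEq n]
    {𝕜 : Type*} [RCLike 𝕜] [PartialOrder 𝕜] {A : Matrix n n 𝕜} (hA : A.PosSemidef) : Matrix n n 𝕜 :=
  (hA.1.eigenvectorUnitary : Matrix n n 𝕜) * diagonal (((↑) : ℝ → 𝕜) ∘ (√·) ∘ hA.1.eigenvalues) *
    (star hA.1.eigenvectorUnitary : Matrix n n 𝕜)

section SqrtPort

open scoped MatrixOrder

lemma Matrix.PosSemidef.sqrt_eq_cfcSqrt {N : ℕ} {A : Matrix (Fin N) (Fin N) ℝ}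
    (hA : A.PosSemidef) : hA.sqrt = CFC.sqrt A := by
  rw [CFC.sqrt_eq_cfc, cfc_nnreal_eq_real _ A hA.nonneg, hA.1.cfc_eq]
  simp only [IsHermitian.cfc, Matrix.PosSemidef.sqrt, Unitary.conjStarAlgAut_apply]
  congr 3
  funext i
  simp [hA.eigenvalues_nonneg i]

lemma Matrix.PosSemidef.posSemidef_sqrt {N : ℕ} {A : Matrix (Fin N) (Fin N) ℝ}
    (hA : A.PosSemidef) : hA.sqrt.PosSemidef := by
  rw [hA.sqrt_eq_cfcSqrt]; exact (CFC.sqrt_nonneg A).posSemidef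

lemma Matrix.PosSemidef.sqrt_mul_self {N : ℕ} {A : Matrix (Fin N) (Fin N) ℝ}
    (hA : A.PosSemidef) : hA.sqrt * hA.sqrt = A := by
  rw [hA.sqrt_eq_cfcSqrt]; exact CFC.sqrt_mul_sqrt_self A hA.nonneg

lemma Matrix.PosSemidef.eq_sqrt_of_sq_eq {N : ℕ} {A B : Matrix (Fin N) (Fin N) ℝ}
    (hB : B.PosSemidef) (hA : A.PosSemidef) (h : B ^ 2 = A) : B = hA.sqrt := by
  rw [hA.sqrt_eq_cfcSqrt]
  exact (CFC.sqrt_unique (by rw [← sq]; exact h) hB.nonneg).symm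

end SqrtPort

lemma conjT_eq {N : ℕ} (A : Matrix (Fin N) (Fin N) ℝ) : Aᴴ = Aᵀ := by
  ext i j; simp [conjTranspose_apply]

lemma tri_apply {N : ℕ} (P Q : Matrix (Fin N) (Fin N) ℝ) (c : Fin N → ℝ) (i j : Fin N) :
    (P * diagonal c * Qᵀ) i j = ∑ k, P i k * c k * Q j k := by
  simp only [mul_apply, transpose_apply, diagonal_apply, mul_ite, mul_zero, ite_mul, zero_mul,
    Finset.sum_ite_eq', Finset.mem_univ, if_true]

lemma exists_orth {N : ℕ} {A : Matrix (Fin N) (Fin N) ℝ} (hA : A.IsHermitian)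
    (lam : Fin N → ℝ) (h : ∃ e : Equiv.Perm (Fin N), lam = hA.eigenvalues ∘ e) :
    ∃ P : Matrix (Fin N) (Fin N) ℝ, P * Pᵀ = 1 ∧ A = P * diagonal lam * Pᵀ := by
  obtain ⟨e, he⟩ := h
  set U : Matrix (Fin N) (Fin N) ℝ := (hA.eigenvectorUnitary : Matrix (Fin N) (Fin N) ℝ)
  have hU : U * Uᵀ = 1 := by
    simpa [U, Matrix.star_eq_conjTranspose] using
      Matrix.mem_unitaryGroup_iff.mp hA.eigenvectorUnitary.2
  have hspec : A = U * diagonal hA.eigenvalues * Uᵀ := by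
    simpa [U, Matrix.star_eq_conjTranspose] using hA.spectral_theorem
  refine ⟨U.submatrix id e, ?_, ?_⟩
  · ext i j
    have := congrFun (congrFun hU i) j
    simp only [mul_apply, transpose_apply, submatrix_apply, id] at this ⊢
    rw [← this]
    exact Equiv.sum_comp e (fun k => U i k * U j k)
  · rw [hspec]
    ext i j
    rw [show (U.submatrix id e)ᵀ = Uᵀ.submatrix e id from rfl]
    rw [show Uᵀ.submatrix e id = (U.submatrix id e)ᵀ from rfl]
    rw [tri_apply, tri_apply]
    rw [← Equiv.sum_comp e (fun k => U i k * hA.eigenvalues k * U j k)]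
    simp [he]

lemma sandwich {N : ℕ} {P : Matrix (Fin N) (Fin N) ℝ} (hPt : Pᵀ * P = 1)
    (B C : Matrix (Fin N) (Fin N) ℝ) : (P * B * Pᵀ) * (P * C * Pᵀ) = P * (B * C) * Pᵀ := by
  simp only [mul_assoc]
  rw [← mul_assoc Pᵀ P, hPt, one_mul]

lemma psd_of_decomp {N : ℕ} (P : Matrix (Fin N) (Fin N) ℝ) (c : Fin N → ℝ)
    (hc : ∀ i, 0 ≤ c i) :
    (P * diagonal c * Pᵀ).PosSemidef := by
  have hs : (fun i => Real.sqrt (c i) * Real.sqrt (c i)) = c :=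
    funext fun i => Real.mul_self_sqrt (hc i)
  have key : P * diagonal c * Pᵀ = (diagonal (fun i => Real.sqrt (c i)) * Pᵀ)ᴴ *
      (diagonal (fun i => Real.sqrt (c i)) * Pᵀ) := by
    rw [conjT_eq, transpose_mul, transpose_transpose, diagonal_transpose]
    simp only [mul_assoc]
    rw [← mul_assoc (diagonal fun i => Real.sqrt (c i)) (diagonal fun i => Real.sqrt (c i)),
      diagonal_mul_diagonal, hs]
  rw [key]
  exact posSemidef_conjTranspose_mul_self _

lemma sqrt_of_decomp {N : ℕ} {A P : Matrix (Fin N) (Fin N) ℝ} (hA : A.PosSemidef)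
    (c : Fin N → ℝ) (hc : ∀ i, 0 ≤ c i) (hP : P * Pᵀ = 1)
    (hd : A = P * diagonal c * Pᵀ) :
    hA.sqrt = P * diagonal (fun i => Real.sqrt (c i)) * Pᵀ := by
  have hPt : Pᵀ * P = 1 := mul_eq_one_comm.mp hP
  have hs : (fun i => Real.sqrt (c i) * Real.sqrt (c i)) = c :=
    funext fun i => Real.mul_self_sqrt (hc i)
  have hpsd : (P * diagonal (fun i => Real.sqrt (c i)) * Pᵀ).PosSemidef :=
    psd_of_decomp P _ (fun i => Real.sqrt_nonneg _)
  have hsq : (P * diagonal (fun i => Real.sqrt (c i)) * Pᵀ) ^ 2 = A := by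
    rw [pow_two, hd, sandwich hPt, diagonal_mul_diagonal, hs]
  exact (hpsd.eq_sqrt_of_sq_eq hA hsq).symm


lemma exists_tele {N : ℕ} (x : Fin N → ℝ) (hm : Monotone x) (h0 : ∀ i, 0 ≤ x i) :
    ∃ a : Fin N → ℝ, (∀ k, 0 ≤ a k) ∧ ∀ j, x j = ∑ k, if k ≤ j then a k else 0 := by
  set a : Fin N → ℝ := fun k =>
    x k - (if h : (k : ℕ) = 0 then 0 else x ⟨(k : ℕ) - 1, lt_of_le_of_lt (Nat.sub_le _ _) k.isLt⟩)
    with ha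
  refine ⟨a, ?_, ?_⟩
  · intro k
    simp only [ha]
    by_cases h : (k : ℕ) = 0
    · simp only [dif_pos h, sub_zero]; exact h0 k
    · rw [dif_neg h]
      have : (⟨(k : ℕ) - 1, lt_of_le_of_lt (Nat.sub_le _ _) k.isLt⟩ : Fin N) ≤ k :=
        Fin.mk_le_of_le_val (Nat.sub_le _ _)
      linarith [hm this]
  · intro j
    obtain ⟨m, hmN⟩ := j
    induction m with
    | zero =>
      have key : ∀ k : Fin N, (if k ≤ (⟨0, hmN⟩ : Fin N) then a k else 0)
          = if k = ⟨0, hmN⟩ then x ⟨0, hmN⟩ else 0 := by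
        intro k
        by_cases hk : k = ⟨0, hmN⟩
        · subst hk
          simp [ha]
        · have h2 : ¬ k ≤ ⟨0, hmN⟩ := by
            simp only [Fin.le_def, Fin.ext_iff, Fin.val_mk] at hk ⊢
            omega
          simp [hk, h2]
      rw [Finset.sum_congr rfl (fun k _ => key k), Finset.sum_ite_eq' _ _ (fun _ => x _)]
      simp
    | succ m ih =>
      have hm' : m < N := by omega
      have step : ∀ k : Fin N, (if k ≤ (⟨m + 1, hmN⟩ : Fin N) then a k else 0)
          = (if k ≤ (⟨m, hm'⟩ : Fin N) then a k else 0)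
          + (if k = ⟨m + 1, hmN⟩ then a k else 0) := by
        intro k
        split_ifs with h1 h2 h3 h4 h5 <;>
          simp_all [Fin.le_def, Fin.ext_iff] <;> omega
      have h2 : ∑ k : Fin N, (if k = (⟨m + 1, hmN⟩ : Fin N) then a k else 0)
          = x ⟨m + 1, hmN⟩ - x ⟨m, hm'⟩ := by
        rw [Finset.sum_ite_eq' _ _ a]
        simp only [Finset.mem_univ, if_true, ha]
        have : ¬ ((⟨m + 1, hmN⟩ : Fin N) : ℕ) = 0 := by simp
        rw [dif_neg this]
        congr 1
      rw [Finset.sum_congr rfl (fun k _ => step k), Finset.sum_add_distrib, h2, ← ih hm']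
      ring


lemma ite_point (s ak bl : ℝ) (c1 c2 : Prop) [Decidable c1] [Decidable c2] :
    s * ((if c1 then ak else 0) * (if c2 then bl else 0))
      = (if c1 ∧ c2 then s else 0) * (ak * bl) := by
  split_ifs with h1 h2 h3 <;> simp_all <;> ring

lemma ds_bound {N : ℕ} (S : Matrix (Fin N) (Fin N) ℝ) (hS0 : ∀ i j, 0 ≤ S i j)
    (hrow : ∀ i, ∑ j, S i j = 1) (hcol : ∀ j, ∑ i, S i j = 1)
    {x y : Fin N → ℝ} (hx : Monotone x) (hy : Monotone y)
    (hx0 : ∀ i, 0 ≤ x i) (hy0 : ∀ i, 0 ≤ y i) :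
    ∑ i, ∑ j, S i j * (x j * y i) ≤ ∑ i, x i * y i := by
  obtain ⟨a, ha0, hax⟩ := exists_tele x hx hx0
  obtain ⟨b, hb0, hby⟩ := exists_tele y hy hy0
  have expand : ∀ i j : Fin N, S i j * (x j * y i)
      = ∑ q : Fin N × Fin N, (if q.1 ≤ j ∧ q.2 ≤ i then S i j else 0) * (a q.1 * b q.2) := by
    intro i j
    rw [Fintype.sum_prod_type]
    have h1 : x j * y i = ∑ k, ∑ l, (if k ≤ j then a k else 0) * (if l ≤ i then b l else 0) := by
      rw [hax j, hby i, Finset.sum_mul_sum]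
    rw [h1, Finset.mul_sum]
    refine Finset.sum_congr rfl fun k _ => ?_
    rw [Finset.mul_sum]
    exact Finset.sum_congr rfl fun l _ => ite_point _ _ _ _ _
  have lhs_eq : ∑ i, ∑ j, S i j * (x j * y i)
      = ∑ q : Fin N × Fin N, (a q.1 * b q.2) *
          (∑ i, ∑ j, if q.1 ≤ j ∧ q.2 ≤ i then S i j else 0) := by
    calc ∑ i, ∑ j, S i j * (x j * y i)
        = ∑ p : Fin N × Fin N, S p.1 p.2 * (x p.2 * y p.1) := by rw [Fintype.sum_prod_type]
      _ = ∑ p : Fin N × Fin N, ∑ q : Fin N × Fin N,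
            (if q.1 ≤ p.2 ∧ q.2 ≤ p.1 then S p.1 p.2 else 0) * (a q.1 * b q.2) :=
          Finset.sum_congr rfl fun p _ => expand p.1 p.2
      _ = ∑ q : Fin N × Fin N, ∑ p : Fin N × Fin N,
            (if q.1 ≤ p.2 ∧ q.2 ≤ p.1 then S p.1 p.2 else 0) * (a q.1 * b q.2) :=
          Finset.sum_comm
      _ = ∑ q : Fin N × Fin N, (a q.1 * b q.2) *
            (∑ i, ∑ j, if q.1 ≤ j ∧ q.2 ≤ i then S i j else 0) := by
          refine Finset.sum_congr rfl fun q _ => ?_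
          rw [Finset.mul_sum, Fintype.sum_prod_type]
          refine Finset.sum_congr rfl fun i _ => ?_
          rw [Finset.mul_sum]
          exact Finset.sum_congr rfl fun j _ => (mul_comm _ _)
  have rhs_eq : ∑ i, x i * y i
      = ∑ q : Fin N × Fin N, (a q.1 * b q.2) *
          (∑ i : Fin N, if q.1 ≤ i ∧ q.2 ≤ i then (1:ℝ) else 0) := by
    have h2 : ∀ i : Fin N, x i * y i
        = ∑ q : Fin N × Fin N, (if q.1 ≤ i ∧ q.2 ≤ i then (1:ℝ) else 0) * (a q.1 * b q.2) := by
      intro i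
      rw [Fintype.sum_prod_type]
      have h1 : x i * y i
          = ∑ k, ∑ l, (if k ≤ i then a k else 0) * (if l ≤ i then b l else 0) := by
        rw [hax i, hby i, Finset.sum_mul_sum]
      rw [h1]
      refine Finset.sum_congr rfl fun k _ => Finset.sum_congr rfl fun l _ => ?_
      have := ite_point 1 (a k) (b l) (k ≤ i) (l ≤ i)
      rw [one_mul] at this
      rw [this]
    calc ∑ i, x i * y i
        = ∑ i : Fin N, ∑ q : Fin N × Fin N,
            (if q.1 ≤ i ∧ q.2 ≤ i then (1:ℝ) else 0) * (a q.1 * b q.2) :=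
          Finset.sum_congr rfl fun i _ => h2 i
      _ = ∑ q : Fin N × Fin N, ∑ i : Fin N,
            (if q.1 ≤ i ∧ q.2 ≤ i then (1:ℝ) else 0) * (a q.1 * b q.2) := Finset.sum_comm
      _ = _ := by
          refine Finset.sum_congr rfl fun q _ => ?_
          rw [Finset.mul_sum]
          exact Finset.sum_congr rfl fun i _ => (mul_comm _ _)
  rw [lhs_eq, rhs_eq]
  refine Finset.sum_le_sum fun q _ => ?_
  refine mul_le_mul_of_nonneg_left ?_ (mul_nonneg (ha0 _) (hb0 _))
  obtain ⟨k, l⟩ := q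
  rcases le_total k l with hkl | hkl
  · have hcond : ∀ i : Fin N, (if k ≤ i ∧ l ≤ i then (1:ℝ) else 0) = if l ≤ i then 1 else 0 := by
      intro i
      by_cases h2 : l ≤ i
      · have h1 : k ≤ i := le_trans hkl h2
        simp [h1, h2]
      · simp [h2]
    calc ∑ i, ∑ j, (if k ≤ j ∧ l ≤ i then S i j else 0)
        ≤ ∑ i : Fin N, if l ≤ i then (1:ℝ) else 0 := by
          refine Finset.sum_le_sum fun i _ => ?_
          by_cases hl : l ≤ i
          · simp only [hl, and_true, if_true]
            calc ∑ j, (if k ≤ j then S i j else 0) ≤ ∑ j, S i j := by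
                  refine Finset.sum_le_sum fun j _ => ?_
                  split_ifs <;> simp [hS0]
              _ = 1 := hrow i
          · simp [hl]
      _ = ∑ i : Fin N, (if k ≤ i ∧ l ≤ i then (1:ℝ) else 0) :=
          (Finset.sum_congr rfl fun i _ => (hcond i)).symm
  · have hcond : ∀ i : Fin N, (if k ≤ i ∧ l ≤ i then (1:ℝ) else 0) = if k ≤ i then 1 else 0 := by
      intro i
      by_cases h1 : k ≤ i
      · have h2 : l ≤ i := le_trans hkl h1
        simp [h1, h2]
      · simp [h1]
    calc ∑ i, ∑ j, (if k ≤ j ∧ l ≤ i then S i j else 0)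
        = ∑ j, ∑ i, (if k ≤ j ∧ l ≤ i then S i j else 0) := Finset.sum_comm
      _ ≤ ∑ j : Fin N, if k ≤ j then (1:ℝ) else 0 := by
          refine Finset.sum_le_sum fun j _ => ?_
          by_cases hk : k ≤ j
          · simp only [hk, true_and, if_true]
            calc ∑ i, (if l ≤ i then S i j else 0) ≤ ∑ i, S i j := by
                  refine Finset.sum_le_sum fun i _ => ?_
                  split_ifs <;> simp [hS0]
              _ = 1 := hcol j
          · simp [hk]
      _ = ∑ i : Fin N, (if k ≤ i ∧ l ≤ i then (1:ℝ) else 0) :=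
          (Finset.sum_congr rfl fun i _ => (hcond i)).symm

lemma trace_decomp {N : ℕ} {P : Matrix (Fin N) (Fin N) ℝ} (hP : P * Pᵀ = 1)
    (c : Fin N → ℝ) : (P * diagonal c * Pᵀ).trace = ∑ i, c i := by
  rw [trace_mul_cycle, mul_eq_one_comm.mp hP, one_mul, trace_diagonal]

lemma orth_mul {N : ℕ} {X Y : Matrix (Fin N) (Fin N) ℝ} (hX : X * Xᵀ = 1)
    (hY : Y * Yᵀ = 1) : (X * Y) * (X * Y)ᵀ = 1 := by
  rw [transpose_mul, show X * Y * (Yᵀ * Xᵀ) = X * (Y * Yᵀ) * Xᵀ by simp only [mul_assoc],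
    hY, mul_one, hX]

lemma trace_sqrt_le {N : ℕ} (SX SY : Matrix (Fin N) (Fin N) ℝ)
    (hX : SX.PosDef) (hY : SY.PosDef) (lamX lamY : Fin N → ℝ)
    (hlamX : ∃ e : Equiv.Perm (Fin N), lamX = hX.1.eigenvalues ∘ e)
    (hlamY : ∃ e : Equiv.Perm (Fin N), lamY = hY.1.eigenvalues ∘ e)
    (hX_sorted : Monotone lamX) (hY_sorted : Monotone lamY) :
    (hX.posSemidef.mul_mul_conjTranspose_same hY.posSemidef.sqrt).sqrt.trace ≤
      ∑ i, Real.sqrt (lamX i) * Real.sqrt (lamY i) := by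
  have hx0 : ∀ i, 0 ≤ lamX i := by
    obtain ⟨e, he⟩ := hlamX
    intro i; rw [he]; exact hX.posSemidef.eigenvalues_nonneg _
  have hy0 : ∀ i, 0 ≤ lamY i := by
    obtain ⟨e, he⟩ := hlamY
    intro i; rw [he]; exact hY.posSemidef.eigenvalues_nonneg _
  obtain ⟨P, hP, hPd⟩ := exists_orth hX.1 lamX hlamX
  obtain ⟨Q, hQ, hQd⟩ := exists_orth hY.1 lamY hlamY
  have hPt : Pᵀ * P = 1 := mul_eq_one_comm.mp hP
  have hQt : Qᵀ * Q = 1 := mul_eq_one_comm.mp hQ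
  set RX := hX.posSemidef.sqrt with hRX
  set RY := hY.posSemidef.sqrt with hRY
  set x' : Fin N → ℝ := fun i => Real.sqrt (lamX i) with hx'
  set y' : Fin N → ℝ := fun i => Real.sqrt (lamY i) with hy'
  have hRXd : RX = P * diagonal x' * Pᵀ := sqrt_of_decomp hX.posSemidef lamX hx0 hP hPd
  have hRYd : RY = Q * diagonal y' * Qᵀ := sqrt_of_decomp hY.posSemidef lamY hy0 hQ hQd
  have hRXs : RXᵀ = RX := by rw [← conjT_eq]; exact hX.posSemidef.posSemidef_sqrt.1
  have hRYs : RYᵀ = RY := by rw [← conjT_eq]; exact hY.posSemidef.posSemidef_sqrt.1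
  have hM := hX.posSemidef.mul_mul_conjTranspose_same hY.posSemidef.sqrt
  set C : Matrix (Fin N) (Fin N) ℝ := RX * RY with hC
  have hCM : Cᵀ * C = RY * SX * RYᴴ := by
    rw [hC, transpose_mul, hRXs, hRYs, conjT_eq, hRYs,
      show RY * RX * (RX * RY) = RY * (RX * RX) * RY by simp only [mul_assoc],
      hX.posSemidef.sqrt_mul_self]
  set G := hM.sqrt with hG
  have hGG : G * G = RY * SX * RYᴴ := hM.sqrt_mul_self
  -- determinants
  have hdet2 : ∀ {B SB : Matrix (Fin N) (Fin N) ℝ}, B * B = SB → SB.PosDef → B.det ≠ 0 := by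
    intro B SB h hSB h0
    have : B.det * B.det = SB.det := by rw [← det_mul, h]
    rw [h0, mul_zero] at this
    exact (ne_of_gt hSB.det_pos) this.symm
  have hdetRX : RX.det ≠ 0 := hdet2 hX.posSemidef.sqrt_mul_self hX
  have hdetRY : RY.det ≠ 0 := hdet2 hY.posSemidef.sqrt_mul_self hY
  have hdetC : C.det ≠ 0 := by
    rw [hC, det_mul]; exact mul_ne_zero hdetRX hdetRY
  have hdetM : (RY * SX * RYᴴ).det ≠ 0 := by
    rw [← hCM, det_mul, det_transpose]; exact mul_ne_zero hdetC hdetC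
  have hdetG : G.det ≠ 0 := by
    intro h0
    have : G.det * G.det = (RY * SX * RYᴴ).det := by rw [← det_mul, hGG]
    rw [h0, mul_zero] at this
    exact hdetM this.symm
  have hGs : Gᵀ = G := by rw [← conjT_eq]; exact hM.posSemidef_sqrt.1
  have hGunit : IsUnit G.det := isUnit_iff_ne_zero.mpr hdetG
  have hGiG : G⁻¹ * G = 1 := nonsing_inv_mul _ hGunit
  have hGGi : G * G⁻¹ = 1 := mul_nonsing_inv _ hGunit
  have hGis : G⁻¹ᵀ = G⁻¹ := by rw [transpose_nonsing_inv, hGs]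
  set V : Matrix (Fin N) (Fin N) ℝ := C * G⁻¹ with hV
  have hVt : Vᵀ = G⁻¹ * Cᵀ := by rw [hV, transpose_mul, hGis]
  have hVtV : Vᵀ * V = 1 := by
    rw [hVt, hV, show G⁻¹ * Cᵀ * (C * G⁻¹) = G⁻¹ * (Cᵀ * C) * G⁻¹ by simp only [mul_assoc],
      hCM, ← hGG, show G⁻¹ * (G * G) * G⁻¹ = G⁻¹ * G * (G * G⁻¹) by simp only [mul_assoc],
      hGiG, hGGi, one_mul]
  have hVVt : V * Vᵀ = 1 := mul_eq_one_comm.mp hVtV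
  have hGVC : G = Vᵀ * C := by
    rw [hVt, mul_assoc, hCM, ← hGG, ← mul_assoc, hGiG, one_mul]
  -- orthogonal matrices A and W
  set A : Matrix (Fin N) (Fin N) ℝ := Qᵀ * Vᵀ * P with hA
  set W : Matrix (Fin N) (Fin N) ℝ := Pᵀ * Q with hW
  have hQto : Qᵀ * (Qᵀ)ᵀ = 1 := by rw [transpose_transpose]; exact hQt
  have hPto : Pᵀ * (Pᵀ)ᵀ = 1 := by rw [transpose_transpose]; exact hPt
  have hVto : Vᵀ * (Vᵀ)ᵀ = 1 := by rw [transpose_transpose]; exact hVtV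
  have hAAt : A * Aᵀ = 1 := orth_mul (orth_mul hQto hVto) hP
  have hAtA : Aᵀ * A = 1 := mul_eq_one_comm.mp hAAt
  have hWWt : W * Wᵀ = 1 := orth_mul hPto hQ
  have hWtW : Wᵀ * W = 1 := mul_eq_one_comm.mp hWWt
  -- trace identity
  have htrace1 : G.trace = (A * diagonal x' * W * diagonal y').trace := by
    rw [hGVC, hC, hRXd, hRYd,
      show Vᵀ * (P * diagonal x' * Pᵀ * (Q * diagonal y' * Qᵀ))
        = (Vᵀ * (P * diagonal x' * Pᵀ) * Q * diagonal y') * Qᵀ by simp only [mul_assoc],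
      trace_mul_comm, hA, hW]
    congr 1
    simp only [mul_assoc]
  have htrace2 : (A * diagonal x' * W * diagonal y').trace
      = ∑ i, ∑ j, (A i j * W j i) * (x' j * y' i) := by
    have e1 : ∀ i k : Fin N, (A * diagonal x' * W) i k = ∑ j, A i j * x' j * W j k := by
      intro i k
      rw [Matrix.mul_apply]
      exact Finset.sum_congr rfl fun j _ => by rw [Matrix.mul_diagonal]
    have e2 : (A * diagonal x' * W * diagonal y').trace
        = ∑ i, (A * diagonal x' * W) i i * y' i := by
      simp only [Matrix.trace, Matrix.diag]
      exact Finset.sum_congr rfl fun i _ => by rw [Matrix.mul_diagonal]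
    rw [e2]
    refine Finset.sum_congr rfl fun i _ => ?_
    rw [e1, Finset.sum_mul]
    exact Finset.sum_congr rfl fun j _ => by ring
  -- doubly stochastic matrix S
  set S : Matrix (Fin N) (Fin N) ℝ := Matrix.of fun i j => (A i j ^ 2 + W j i ^ 2) / 2 with hS
  have hS0 : ∀ i j, 0 ≤ S i j := fun i j => by
    simp only [hS, Matrix.of_apply]; positivity
  have diag_one : ∀ (X : Matrix (Fin N) (Fin N) ℝ) (i : Fin N), X * Xᵀ = 1 →
      ∑ j, X i j ^ 2 = 1 := by
    intro X i h
    have := congrFun (congrFun h i) i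
    simp only [Matrix.mul_apply, Matrix.transpose_apply, Matrix.one_apply_eq] at this
    simpa [pow_two] using this
  have hrow : ∀ i, ∑ j, S i j = 1 := by
    intro i
    have h1 : ∑ j, A i j ^ 2 = 1 := diag_one A i hAAt
    have h2 : ∑ j, (Wᵀ) i j ^ 2 = 1 := diag_one Wᵀ i (by rw [transpose_transpose]; exact hWtW)
    simp only [Matrix.transpose_apply] at h2
    simp only [hS, Matrix.of_apply]
    rw [show (∑ j, (A i j ^ 2 + W j i ^ 2) / 2) = ((∑ j, A i j ^ 2) + ∑ j, W j i ^ 2) / 2 by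
      rw [← Finset.sum_add_distrib, ← Finset.sum_div], h1, h2]
    norm_num
  have hcol : ∀ j, ∑ i, S i j = 1 := by
    intro j
    have h1 : ∑ i, (Aᵀ) j i ^ 2 = 1 := diag_one Aᵀ j (by rw [transpose_transpose]; exact hAtA)
    simp only [Matrix.transpose_apply] at h1
    have h2 : ∑ i, W j i ^ 2 = 1 := diag_one W j hWWt
    simp only [hS, Matrix.of_apply]
    rw [show (∑ i, (A i j ^ 2 + W j i ^ 2) / 2) = ((∑ i, A i j ^ 2) + ∑ i, W j i ^ 2) / 2 by
      rw [← Finset.sum_add_distrib, ← Finset.sum_div], h1, h2]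
    norm_num
  have hx'm : Monotone x' := fun i j h => Real.sqrt_le_sqrt (hX_sorted h)
  have hy'm : Monotone y' := fun i j h => Real.sqrt_le_sqrt (hY_sorted h)
  have hx'0 : ∀ i, 0 ≤ x' i := fun i => Real.sqrt_nonneg _
  have hy'0 : ∀ i, 0 ≤ y' i := fun i => Real.sqrt_nonneg _
  calc G.trace = ∑ i, ∑ j, (A i j * W j i) * (x' j * y' i) := by rw [htrace1, htrace2]
    _ ≤ ∑ i, ∑ j, S i j * (x' j * y' i) := by
        refine Finset.sum_le_sum fun i _ => Finset.sum_le_sum fun j _ => ?_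
        refine mul_le_mul_of_nonneg_right ?_ (mul_nonneg (hx'0 _) (hy'0 _))
        simp only [hS, Matrix.of_apply]
        nlinarith [sq_nonneg (A i j - W j i)]
    _ ≤ ∑ i, x' i * y' i := ds_bound S hS0 hrow hcol hx'm hy'm hx'0 hy'0

/-- For positive definite `SX, SY` with eigenvalues `λX, λY` (both sorted in the same,
say increasing, order), the Gaussian squared Wasserstein-2 distance
`Tr[SX + SY − 2 (SY^{1/2} SX SY^{1/2})^{1/2}]` is at least
`Σ_i (√λX_i − √λY_i)²`, with equality when `SX` and `SY` commute with matching
eigenvector orderings (i.e. are simultaneously diagonalized by an orthogonal `U`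
with these sorted eigenvalue lists). -/
theorem gaussian_w2_tensorization (N : ℕ)
    (SX SY : Matrix (Fin N) (Fin N) ℝ) (hX : SX.PosDef) (hY : SY.PosDef)
    (lamX lamY : Fin N → ℝ)
    (hlamX : ∃ e : Equiv.Perm (Fin N), lamX = hX.1.eigenvalues ∘ e)
    (hlamY : ∃ e : Equiv.Perm (Fin N), lamY = hY.1.eigenvalues ∘ e)
    (hX_sorted : Monotone lamX) (hY_sorted : Monotone lamY) :
    (∑ i, (Real.sqrt (lamX i) - Real.sqrt (lamY i)) ^ 2) ≤
      (SX + SY -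
        2 • (hX.posSemidef.mul_mul_conjTranspose_same hY.posSemidef.sqrt).sqrt).trace ∧
    ((∃ U : Matrix (Fin N) (Fin N) ℝ, U * Uᵀ = 1 ∧
        SX = U * Matrix.diagonal lamX * Uᵀ ∧ SY = U * Matrix.diagonal lamY * Uᵀ) →
      (SX + SY -
        2 • (hX.posSemidef.mul_mul_conjTranspose_same hY.posSemidef.sqrt).sqrt).trace =
        ∑ i, (Real.sqrt (lamX i) - Real.sqrt (lamY i)) ^ 2) := by
  have hx0 : ∀ i, 0 ≤ lamX i := by
    obtain ⟨e, he⟩ := hlamX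
    intro i; rw [he]; exact hX.posSemidef.eigenvalues_nonneg _
  have hy0 : ∀ i, 0 ≤ lamY i := by
    obtain ⟨e, he⟩ := hlamY
    intro i; rw [he]; exact hY.posSemidef.eigenvalues_nonneg _
  have hM := hX.posSemidef.mul_mul_conjTranspose_same hY.posSemidef.sqrt
  set G := (hX.posSemidef.mul_mul_conjTranspose_same hY.posSemidef.sqrt).sqrt with hG
  -- traces of SX and SY
  obtain ⟨P, hP, hPd⟩ := exists_orth hX.1 lamX hlamX
  obtain ⟨Q, hQ, hQd⟩ := exists_orth hY.1 lamY hlamY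
  have htrX : SX.trace = ∑ i, lamX i := by rw [hPd]; exact trace_decomp hP _
  have htrY : SY.trace = ∑ i, lamY i := by rw [hQd]; exact trace_decomp hQ _
  -- expansion of traces
  have hexp : (SX + SY - 2 • G).trace = SX.trace + SY.trace - 2 * G.trace := by
    rw [Matrix.trace_sub, Matrix.trace_add, Matrix.trace_smul]
    simp [nsmul_eq_mul]
  -- sum expansion
  have hsum : ∑ i, (Real.sqrt (lamX i) - Real.sqrt (lamY i)) ^ 2
      = (∑ i, lamX i) + (∑ i, lamY i)
        - 2 * ∑ i, Real.sqrt (lamX i) * Real.sqrt (lamY i) := by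
    have : ∀ i, (Real.sqrt (lamX i) - Real.sqrt (lamY i)) ^ 2
        = lamX i + lamY i - 2 * (Real.sqrt (lamX i) * Real.sqrt (lamY i)) := by
      intro i
      have h1 : Real.sqrt (lamX i) ^ 2 = lamX i := Real.sq_sqrt (hx0 i)
      have h2 : Real.sqrt (lamY i) ^ 2 = lamY i := Real.sq_sqrt (hy0 i)
      nlinarith [h1, h2]
    rw [Finset.sum_congr rfl fun i _ => this i]
    rw [Finset.sum_sub_distrib, Finset.sum_add_distrib, ← Finset.mul_sum]
  constructor
  · have hle := trace_sqrt_le SX SY hX hY lamX lamY hlamX hlamY hX_sorted hY_sorted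
    rw [hexp, hsum, htrX, htrY]
    have : (G.trace : ℝ) ≤ ∑ i, Real.sqrt (lamX i) * Real.sqrt (lamY i) := hle
    linarith
  · rintro ⟨U, hU, hUX, hUY⟩
    have hUt : Uᵀ * U = 1 := mul_eq_one_comm.mp hU
    -- sqrt of SY
    have hRYd : hY.posSemidef.sqrt = U * diagonal (fun i => Real.sqrt (lamY i)) * Uᵀ :=
      sqrt_of_decomp hY.posSemidef lamY hy0 hU hUY
    -- decomposition of M
    have hMd : hY.posSemidef.sqrt * SX * (hY.posSemidef.sqrt)ᴴ
        = U * diagonal (fun i => lamX i * lamY i) * Uᵀ := by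
      rw [conjT_eq, hRYd, hUX]
      have hsym : (U * diagonal (fun i => Real.sqrt (lamY i)) * Uᵀ)ᵀ
          = U * diagonal (fun i => Real.sqrt (lamY i)) * Uᵀ := by
        rw [transpose_mul, transpose_mul, transpose_transpose, diagonal_transpose, mul_assoc]
      rw [hsym, sandwich hUt, sandwich hUt, diagonal_mul_diagonal, diagonal_mul_diagonal]
      have hfun : (fun i => Real.sqrt (lamY i) * lamX i * Real.sqrt (lamY i))
          = fun i => lamX i * lamY i := funext fun i => by
        rw [mul_comm (Real.sqrt (lamY i)) (lamX i), mul_assoc, Real.mul_self_sqrt (hy0 i)]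
      rw [hfun]
    have hGd : G = U * diagonal (fun i => Real.sqrt (lamX i * lamY i)) * Uᵀ := by
      rw [hG]
      exact sqrt_of_decomp hM (fun i => lamX i * lamY i)
        (fun i => mul_nonneg (hx0 i) (hy0 i)) hU hMd
    have htrG : G.trace = ∑ i, Real.sqrt (lamX i) * Real.sqrt (lamY i) := by
      rw [hGd, trace_decomp hU]
      exact Finset.sum_congr rfl fun i _ => Real.sqrt_mul (hx0 i) _
    have hexp2 : (SX + SY - 2 • G).trace = SX.trace + SY.trace - 2 * G.trace := by
      rw [Matrix.trace_sub, Matrix.trace_add, Matrix.trace_smul]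
      simp [nsmul_eq_mul]
    rw [hexp2, hsum, htrX, htrY, htrG]
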